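/- arXiv:2011.02321 — 3 statements merged into one kernel-verified Lean document; each statement's English description precedes it below -/
import Mathlib

section
/- Let M ⊆ ℝⁿ be open and H : T*M → ℝ a smooth Hamiltonian with Hamilton's equations ẋ^j = -∂_{p_j}H, ṗ_j = ∂_{x^j}H. Suppose H(x,p) = p₀(α(x,p)) for a fixed covector p₀ and a smooth map α satisfying p₀(α(x,tp₀)) = p₀(x) for all t. Then the solution starting at (x₀, 0) has momentum component p(u) = u·p₀ for all u, i.e. r(φ^H_u(x₀,0)) = u p₀. -/
open Matrix Set

/-- Let `H(x,p) = p₀(α(x,p))` for a smooth map `α` satisfying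
`p₀(α(x, t•p₀)) = p₀(x)` for all `t`. Then the Hamiltonian trajectory `(X,P)` of
`ẋ^j = -∂_{p_j}H`, `ṗ_j = ∂_{x^j}H` starting at `(x₀, 0)` has momentum `P u = u • p₀`. -/
theorem stmt4 {n : ℕ} (α : (Fin n → ℝ) → (Fin n → ℝ) → (Fin n → ℝ))
    (hα : ContDiff ℝ (⊤ : ℕ∞) (fun z : (Fin n → ℝ) × (Fin n → ℝ) => α z.1 z.2))
    (p₀ x₀ : Fin n → ℝ)
    (hcons : ∀ (x : Fin n → ℝ) (t : ℝ), p₀ ⬝ᵥ α x (t • p₀) = p₀ ⬝ᵥ x)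
    (X P : ℝ → (Fin n → ℝ))
    (hX0 : X 0 = x₀) (hP0 : P 0 = 0)
    (hHx : ∀ (u : ℝ) (j : Fin n), HasDerivAt (fun s => X s j)
      (-(fderiv ℝ (fun q => p₀ ⬝ᵥ α (X u) q) (P u) (Pi.single j 1))) u)
    (hHp : ∀ (u : ℝ) (j : Fin n), HasDerivAt (fun s => P s j)
      (fderiv ℝ (fun y => p₀ ⬝ᵥ α y (P u)) (X u) (Pi.single j 1)) u) :
    ∀ u, P u = u • p₀ := by
  classical
  set h : (Fin n → ℝ) × (Fin n → ℝ) → ℝ := fun z => p₀ ⬝ᵥ α z.1 z.2 with hh_def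
  have hh : ContDiff ℝ (⊤ : ℕ∞) h := by
    have e : h = fun z : (Fin n → ℝ) × (Fin n → ℝ) => ∑ i, p₀ i * α z.1 z.2 i := by
      funext z; simp [hh_def, dotProduct]
    rw [e]
    exact ContDiff.sum fun i _ => contDiff_const.mul ((contDiff_pi.1 hα) i)
  -- partial derivative in the first variable
  have factA : ∀ (x p w : Fin n → ℝ),
      fderiv ℝ (fun y => p₀ ⬝ᵥ α y p) x w = fderiv ℝ h (x, p) (w, 0) := by
    intro x p w
    have h1 : HasFDerivAt h (fderiv ℝ h (x, p)) (x, p) :=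
      (hh.differentiable (by simp) (x, p)).hasFDerivAt
    have h2 : HasFDerivAt (fun y : Fin n → ℝ => (y, p))
        (ContinuousLinearMap.inl ℝ (Fin n → ℝ) (Fin n → ℝ)) x :=
      HasFDerivAt.prodMk (hasFDerivAt_id x) (hasFDerivAt_const p x)
    have h3 := h1.comp x h2
    have e : fderiv ℝ (fun y => p₀ ⬝ᵥ α y p) x
        = (fderiv ℝ h (x, p)).comp (ContinuousLinearMap.inl ℝ _ _) := h3.fderiv
    rw [e]; rfl
  set G : (Fin n → ℝ) × (Fin n → ℝ) → (Fin n → ℝ) :=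
    fun z j => fderiv ℝ h z (Pi.single j 1, 0) with hG_def
  have hG : ContDiff ℝ (⊤ : ℕ∞) G := by
    apply contDiff_pi.2
    intro j
    exact ((ContinuousLinearMap.apply ℝ ℝ
      ((Pi.single j 1, 0) : (Fin n → ℝ) × (Fin n → ℝ))).contDiff).comp
      (hh.fderiv_right (m := (⊤ : ℕ∞)) (by simp))
  -- fderiv of the linear map y ↦ p₀ ⬝ᵥ y
  have hL : ∀ x : Fin n → ℝ, HasFDerivAt (fun y : Fin n → ℝ => p₀ ⬝ᵥ y)
      (∑ i, p₀ i • (ContinuousLinearMap.proj i : (Fin n → ℝ) →L[ℝ] ℝ)) x := by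
    intro x
    have : (fun y : Fin n → ℝ => p₀ ⬝ᵥ y)
        = fun y => (∑ i, p₀ i • (ContinuousLinearMap.proj i : (Fin n → ℝ) →L[ℝ] ℝ)) y := by
      funext y
      simp [dotProduct, ContinuousLinearMap.sum_apply]
    rw [this]
    exact (∑ i, p₀ i • (ContinuousLinearMap.proj i : (Fin n → ℝ) →L[ℝ] ℝ)).hasFDerivAt
  have factB : ∀ (x : Fin n → ℝ) (t : ℝ), G (x, t • p₀) = p₀ := by
    intro x t
    funext j
    have e1 : (fun y => p₀ ⬝ᵥ α y (t • p₀)) = fun y : Fin n → ℝ => p₀ ⬝ᵥ y := by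
      funext y; exact hcons y t
    have e2 : G (x, t • p₀) j = fderiv ℝ (fun y => p₀ ⬝ᵥ α y (t • p₀)) x (Pi.single j 1) :=
      (factA x (t • p₀) (Pi.single j 1)).symm
    rw [e2, e1, (hL x).fderiv]
    simp [ContinuousLinearMap.sum_apply, Pi.single_apply, mul_ite]
  -- rewrite the P-equation using G
  have hP' : ∀ (u : ℝ) (j : Fin n),
      HasDerivAt (fun s => P s j) (G (X u, P u) j) u := by
    intro u j
    have := hHp u j
    rwa [factA (X u) (P u) (Pi.single j 1)] at this
  -- continuity of X and P
  have hXc : Continuous X :=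
    continuous_pi fun j => continuous_iff_continuousAt.2 fun t => (hHx t j).continuousAt
  have hPc : Continuous P :=
    continuous_pi fun j => continuous_iff_continuousAt.2 fun t => (hHp t j).continuousAt
  intro u
  set a : ℝ := -(|u| + 1) with ha_def
  set b : ℝ := |u| + 1 with hb_def
  have hab : a < b := by
    have : (0:ℝ) ≤ |u| := abs_nonneg u
    simp only [ha_def, hb_def]; linarith
  have h0 : (0:ℝ) ∈ Ioo a b := by
    constructor <;> simp only [ha_def, hb_def] <;> nlinarith [abs_nonneg u]
  have hu : u ∈ Icc a b := by
    constructor <;> simp only [ha_def, hb_def] <;> nlinarith [abs_nonneg u, le_abs_self u,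
      neg_abs_le u]
  -- clamp function
  set c : ℝ → ℝ := fun t => max a (min t b) with hc_def
  have hc_mem : ∀ t, c t ∈ Icc a b := by
    intro t
    refine ⟨le_max_left _ _, max_le hab.le (min_le_right _ _)⟩
  have hc_eq : ∀ t ∈ Icc a b, c t = t := by
    intro t ht
    simp only [hc_def]
    rw [min_eq_left ht.2, max_eq_right ht.1]
  -- bound on trajectories
  obtain ⟨C, hC⟩ := (isCompact_Icc (a := a) (b := b)).exists_bound_of_continuousOn
    (f := fun t => (P t, t • p₀)) (hPc.prodMk (continuous_id.smul continuous_const)).continuousOn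
  set s : Set (Fin n → ℝ) := Metric.closedBall 0 C with hs_def
  have hPs : ∀ t ∈ Icc a b, P t ∈ s := by
    intro t ht
    rw [hs_def, Metric.mem_closedBall, dist_zero_right]
    exact le_trans (norm_fst_le (P t, t • p₀)) (hC t ht)
  have hgs : ∀ t ∈ Icc a b, t • p₀ ∈ s := by
    intro t ht
    rw [hs_def, Metric.mem_closedBall, dist_zero_right]
    exact le_trans (norm_snd_le (P t, t • p₀)) (hC t ht)
  -- Lipschitz bound for the vector field
  set S : Set ((Fin n → ℝ) × (Fin n → ℝ)) := (X '' Icc a b) ×ˢ s with hS_def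
  have hScpt : IsCompact S :=
    ((isCompact_Icc).image hXc).prod (isCompact_closedBall _ _)
  obtain ⟨C₂, hC₂⟩ := hScpt.exists_bound_of_continuousOn
    (f := fderiv ℝ G) ((hG.fderiv_right (m := (⊤ : ℕ∞)) (by simp)).continuous.continuousOn)
  set K : NNReal := ⟨max C₂ 0, le_max_right _ _⟩ with hK_def
  -- partial fderiv in second variable
  have factC : ∀ x p : Fin n → ℝ, HasFDerivAt (fun q => G (x, q))
      ((fderiv ℝ G (x, p)).comp (ContinuousLinearMap.inr ℝ (Fin n → ℝ) (Fin n → ℝ))) p := by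
    intro x p
    have h1 : HasFDerivAt G (fderiv ℝ G (x, p)) (x, p) :=
      (hG.differentiable (by simp) (x, p)).hasFDerivAt
    have h2 : HasFDerivAt (fun q : Fin n → ℝ => (x, q))
        (ContinuousLinearMap.inr ℝ (Fin n → ℝ) (Fin n → ℝ)) p :=
      HasFDerivAt.prodMk (hasFDerivAt_const x p) (hasFDerivAt_id p)
    exact h1.comp p h2
  have hinr : ‖(ContinuousLinearMap.inr ℝ (Fin n → ℝ) (Fin n → ℝ))‖ ≤ 1 := by
    apply ContinuousLinearMap.opNorm_le_bound _ zero_le_one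
    intro q
    simp [Prod.norm_def]
  have hv : ∀ t : ℝ, LipschitzOnWith K (fun p => G (X (c t), p)) s := by
    intro t
    apply Convex.lipschitzOnWith_of_nnnorm_fderiv_le
      (fun p _ => (factC (X (c t)) p).differentiableAt) ?_ (convex_closedBall _ _)
    intro p hp
    have hmem : (X (c t), p) ∈ S := ⟨⟨c t, hc_mem t, rfl⟩, hp⟩
    have hb1 : ‖fderiv ℝ (fun q => G (X (c t), q)) p‖ ≤ max C₂ 0 := by
      rw [(factC (X (c t)) p).fderiv]
      calc ‖(fderiv ℝ G (X (c t), p)).comp (ContinuousLinearMap.inr ℝ _ _)‖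
          ≤ ‖fderiv ℝ G (X (c t), p)‖ * ‖(ContinuousLinearMap.inr ℝ (Fin n → ℝ) (Fin n → ℝ))‖ :=
            ContinuousLinearMap.opNorm_comp_le _ _
        _ ≤ C₂ * 1 := by
            apply mul_le_mul (hC₂ _ hmem) hinr (norm_nonneg _)
            exact le_trans (norm_nonneg _) (hC₂ _ hmem)
        _ ≤ max C₂ 0 := by rw [mul_one]; exact le_max_left _ _
    rw [← NNReal.coe_le_coe, coe_nnnorm]
    exact hb1
  -- the two solutions
  have hf' : ∀ t ∈ Ioo a b, HasDerivAt P ((fun p => G (X (c t), p)) (P t)) t := by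
    intro t ht
    rw [hc_eq t (Ioo_subset_Icc_self ht)]
    exact hasDerivAt_pi.2 fun j => hP' t j
  have hg' : ∀ t ∈ Ioo a b, HasDerivAt (fun r : ℝ => r • p₀)
      ((fun p => G (X (c t), p)) (t • p₀)) t := by
    intro t ht
    have : HasDerivAt (fun r : ℝ => r • p₀) p₀ t := by
      simpa using (hasDerivAt_id t).smul_const p₀
    simpa only [factB (X (c t)) t] using this
  have heq := ODE_solution_unique_of_mem_Icc (v := fun t p => G (X (c t), p))
    (s := fun _ => s) (K := K) (fun t _ => hv t) h0 hPc.continuousOn hf'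
    (fun t ht => hPs t (Ioo_subset_Icc_self ht))
    ((continuous_id.smul continuous_const).continuousOn) hg'
    (fun t ht => hgs t (Ioo_subset_Icc_self ht))
    (by rw [hP0]; simp)
  exact heq hu
end

section
/- Let 𝔥 be a finite-dimensional Lie algebra and for p near 0 define θ^R_p : 𝔥 → 𝔥 by θ^R_p(v) = ∫₀¹ e^{u·ad_p} v du. Then the solution k(t) of the ODE θ^R_{k(t)}(k̇(t)) = p₁ with k(0) = p₂ satisfies k(t) = BCH(t p₁, p₂) for p₁, p₂ sufficiently small, where BCH is the Baker–Campbell–Hausdorff product. -/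
open scoped Topology

/-- `ad p = [p, ·]` as a continuous linear map on a Banach algebra. -/
noncomputable def adL {A : Type*} [NormedRing A] [NormedAlgebra ℝ A] (p : A) :
    A →L[ℝ] A :=
  ContinuousLinearMap.mul ℝ A p - (ContinuousLinearMap.mul ℝ A).flip p

/-- The right-invariant Maurer–Cartan operator `θ^R_p(v) = ∫₀¹ e^{u·ad_p} v du`. -/
noncomputable def thetaR {A : Type*} [NormedRing A] [NormedAlgebra ℝ A] [CompleteSpace A]
    (p v : A) : A :=
  ∫ u in (0:ℝ)..1, (NormedSpace.exp (u • adL p)) v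

set_option linter.unusedSectionVars false
set_option maxHeartbeats 1000000

open NormedSpace

/-- A `ℚ`-normed-algebra structure restricted from `ℝ`. -/
noncomputable def qNormedAlg {A : Type*} [NormedRing A] [NormedAlgebra ℝ A] : NormedAlgebra ℚ A :=
  NormedAlgebra.restrictScalars ℚ ℝ A

attribute [local instance] qNormedAlg

section Beta

/-- The beta integral with natural exponents. -/
lemma beta_nat (j : ℕ) : ∀ i : ℕ, (∫ u in (0:ℝ)..1, u ^ i * (1 - u) ^ j)
    = (i.factorial * j.factorial : ℝ) / (i + j + 1).factorial := by
  induction j with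
  | zero =>
    intro i
    simp only [pow_zero, mul_one, Nat.factorial]
    rw [integral_pow]
    simp [Nat.factorial_succ]
    have h0 : (i.factorial : ℝ) ≠ 0 := by positivity
    field_simp
  | succ j IH =>
    intro i
    have hF : ∀ u : ℝ, HasDerivAt (fun u : ℝ => ((i:ℝ)+1)⁻¹ * (u^(i+1) * (1-u)^(j+1)))
        (((i:ℝ)+1)⁻¹ * (((i:ℝ)+1) * u^i * (1-u)^(j+1) + u^(i+1) * (((j:ℝ)+1) * (1-u)^j * (-1)))) u := by
      intro u
      have h1 : HasDerivAt (fun u : ℝ => 1 - u) (-1) u := by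
        simpa using (hasDerivAt_id u).const_sub 1
      have h2 : HasDerivAt (fun u : ℝ => (1-u)^(j+1)) (((j:ℝ)+1) * (1-u)^j * (-1)) u := by
        have := (hasDerivAt_pow (j+1) (1-u)).comp u h1
        simpa [Function.comp_def] using this
      have h3 : HasDerivAt (fun u : ℝ => u^(i+1)) (((i:ℝ)+1) * u^i) u := by
        simpa using hasDerivAt_pow (i+1) u
      exact ((h3.mul h2).const_mul _).congr_deriv (by ring)
    have hInt : ∫ u in (0:ℝ)..1, (((i:ℝ)+1)⁻¹ * (((i:ℝ)+1) * u^i * (1-u)^(j+1) + u^(i+1) * (((j:ℝ)+1) * (1-u)^j * (-1)))) = 0 := by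
      rw [intervalIntegral.integral_eq_sub_of_hasDerivAt (fun u _ => hF u)]
      · norm_num
      · apply Continuous.intervalIntegrable
        continuity
    have e1 : IntervalIntegrable (fun u : ℝ => u^i * (1-u)^(j+1)) MeasureTheory.volume 0 1 := by
      apply Continuous.intervalIntegrable; continuity
    have e2 : IntervalIntegrable (fun u : ℝ => u^(i+1) * (1-u)^j) MeasureTheory.volume 0 1 := by
      apply Continuous.intervalIntegrable; continuity
    have key : (∫ u in (0:ℝ)..1, u^i * (1-u)^(j+1))
        = (((j:ℝ)+1)/((i:ℝ)+1)) * ∫ u in (0:ℝ)..1, u^(i+1) * (1-u)^j := by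
      have lhs_eq : ∀ u : ℝ, (((i:ℝ)+1)⁻¹ * (((i:ℝ)+1) * u^i * (1-u)^(j+1) + u^(i+1) * (((j:ℝ)+1) * (1-u)^j * (-1))))
          = u^i * (1-u)^(j+1) - (((j:ℝ)+1)/((i:ℝ)+1)) * (u^(i+1) * (1-u)^j) := by
        intro u
        have : ((i:ℝ)+1) ≠ 0 := by positivity
        field_simp
        ring
      rw [intervalIntegral.integral_congr (fun u _ => lhs_eq u)] at hInt
      rw [intervalIntegral.integral_sub e1 (e2.const_mul _)] at hInt
      rw [intervalIntegral.integral_const_mul] at hInt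
      linarith
    rw [key, IH (i+1)]
    have h2 : (i + (j+1) + 1) = (i + 1) + j + 1 := by omega
    rw [h2]
    have hfi : ((i+1).factorial : ℝ) = ((i:ℝ)+1) * i.factorial := by
      rw [Nat.factorial_succ]; push_cast; ring
    have hfj : ((j+1).factorial : ℝ) = ((j:ℝ)+1) * j.factorial := by
      rw [Nat.factorial_succ]; push_cast; ring
    rw [hfi, hfj]
    have hne : ((i:ℝ)+1) ≠ 0 := by positivity
    have hne2 : (((i+1+j+1).factorial : ℝ)) ≠ 0 := by positivity
    field_simp

end Beta

namespace Stmt12Aux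

variable {A : Type*} [NormedRing A] [NormedAlgebra ℝ A] [CompleteSpace A]

/-- Left regular representation as a ring hom. -/
noncomputable def Lh (A : Type*) [NormedRing A] [NormedAlgebra ℝ A] : A →+* (A →L[ℝ] A) where
  toFun a := ContinuousLinearMap.mul ℝ A a
  map_one' := by ext v; simp
  map_mul' a b := by ext v; simp [mul_assoc]
  map_zero' := by ext v; simp
  map_add' a b := by ext v; simp [add_mul]

/-- Right regular representation as a ring hom from the opposite algebra. -/
noncomputable def Rh (A : Type*) [NormedRing A] [NormedAlgebra ℝ A] : Aᵐᵒᵖ →+* (A →L[ℝ] A) where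
  toFun a := (ContinuousLinearMap.mul ℝ A).flip a.unop
  map_one' := by ext v; simp
  map_mul' a b := by ext v; simp [mul_assoc]
  map_zero' := by ext v; simp
  map_add' a b := by ext v; simp [mul_add]

lemma Lh_continuous : Continuous (Lh A) := (ContinuousLinearMap.mul ℝ A).continuous

lemma Rh_continuous : Continuous (Rh A) :=
  ((ContinuousLinearMap.mul ℝ A).flip.continuous).comp MulOpposite.continuous_unop

lemma adL_eq (p : A) : adL p = Lh A p - Rh A (MulOpposite.op p) := rfl

lemma adL_smul (u : ℝ) (p : A) : adL (u • p) = u • adL p := by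
  ext v
  simp [adL, smul_sub, smul_mul_assoc, mul_smul_comm]

lemma exp_adL_apply (p v : A) :
    NormedSpace.exp (adL p) v = exp p * v * exp (-p) := by
  have hc0 : Commute (Lh A p) (Rh A (MulOpposite.op p)) := by
    ext v
    simp [Lh, Rh, ContinuousLinearMap.mul_apply, mul_assoc]
  have hc : Commute (Lh A p) (-(Rh A (MulOpposite.op p))) := hc0.neg_right
  have h1 : adL p = Lh A p + -(Rh A (MulOpposite.op p)) := by
    rw [adL_eq, sub_eq_add_neg]
  rw [h1, exp_add_of_commute hc]
  have hL : exp (Lh A p) = Lh A (exp p) := (map_exp (Lh A) Lh_continuous p).symm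
  have hR : exp (-(Rh A (MulOpposite.op p))) = Rh A (MulOpposite.op (exp (-p))) := by
    rw [← map_neg, ← MulOpposite.op_neg, ← map_exp (Rh A) Rh_continuous, exp_op]
  rw [hL, hR]
  simp [Lh, Rh, ContinuousLinearMap.mul_apply, mul_assoc]

lemma exp_smul_adL_apply (u : ℝ) (p v : A) :
    NormedSpace.exp (u • adL p) v = exp (u • p) * v * exp (-(u • p)) := by
  rw [← adL_smul, exp_adL_apply]

lemma thetaR_mul_exp (p v : A) :
    thetaR p v * exp p = ∫ u in (0:ℝ)..1, exp (u • p) * v * exp ((1-u) • p) := by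
  have hcont : Continuous fun u : ℝ => (exp (u • adL p)) v := by
    have h1 : Continuous fun u : ℝ => exp (u • adL p) :=
      exp_continuous.comp (continuous_id.smul continuous_const)
    exact (ContinuousLinearMap.apply ℝ A v).continuous.comp h1
  have h2 := ContinuousLinearMap.intervalIntegral_comp_comm
      ((ContinuousLinearMap.mul ℝ A).flip (exp p))
      (hcont.intervalIntegrable (μ := MeasureTheory.volume) 0 1)
  have h3 : ((ContinuousLinearMap.mul ℝ A).flip (exp p)) (thetaR p v) = thetaR p v * exp p := rfl
  rw [thetaR] at h3 ⊢
  rw [← h3, ← h2]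
  apply intervalIntegral.integral_congr
  intro u _
  show (exp (u • adL p)) v * exp p = _
  rw [exp_smul_adL_apply]
  have hc : Commute (-(u • p)) p := (((Commute.refl p).smul_left u).neg_left)
  have h4 : exp (-(u • p)) * exp p = exp ((1-u) • p) := by
    rw [← exp_add_of_commute hc]
    congr 1
    rw [sub_smul, one_smul, sub_eq_neg_add]
  rw [mul_assoc, mul_assoc, h4, ← mul_assoc]

/-- The (i,j) term of the double series for `e^{up} v e^{(1-u)p}`. -/
noncomputable def Fq (p v : A) (q : ℕ × ℕ) (u : ℝ) : A :=
  (((q.1.factorial : ℝ)⁻¹ * u ^ q.1) * ((q.2.factorial : ℝ)⁻¹ * (1-u) ^ q.2)) •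
    (p ^ q.1 * (v * p ^ q.2))

lemma integral_conj (p v : A) :
    (∫ u in (0:ℝ)..1, exp (u • p) * v * exp ((1-u) • p))
      = ∑' q : ℕ × ℕ, (((q.1 + q.2 + 1).factorial : ℝ))⁻¹ • (p ^ q.1 * (v * p ^ q.2)) := by
  classical
  have ea : ∀ w : ℝ, exp (w • p) = ∑' i : ℕ, ((i.factorial : ℝ)⁻¹ * w ^ i) • p ^ i := by
    intro w
    rw [exp_eq_tsum ℝ]
    exact tsum_congr fun i => by rw [smul_pow, smul_smul]
  have hnorm_eq : ∀ (w : ℝ) (i : ℕ),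
      ‖((i.factorial : ℝ)⁻¹ * w ^ i) • p ^ i‖ = ‖(i.factorial : ℝ)⁻¹ • (w • p) ^ i‖ := by
    intro w i
    rw [smul_pow, smul_smul]
  have hsa : ∀ w : ℝ, Summable fun i : ℕ => ‖((i.factorial : ℝ)⁻¹ * w ^ i) • p ^ i‖ := by
    intro w
    refine Summable.congr (norm_expSeries_summable' (𝕂 := ℝ) (w • p)) fun i => ?_
    rw [hnorm_eq]
  have hb_eq : ∀ u : ℝ, v * exp ((1-u) • p)
      = ∑' j : ℕ, (((j.factorial : ℝ)⁻¹ * (1-u) ^ j) • (v * p ^ j)) := by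
    intro u
    rw [ea (1-u), ← ((hsa (1-u)).of_norm).tsum_mul_left v]
    exact tsum_congr fun j => by rw [mul_smul_comm]
  have hsb : ∀ u : ℝ, Summable fun j : ℕ =>
      ‖((j.factorial : ℝ)⁻¹ * (1-u) ^ j) • (v * p ^ j)‖ := by
    intro u
    have hg : Summable fun j : ℕ => ‖v‖ * ‖((j.factorial : ℝ)⁻¹ * (1-u) ^ j) • p ^ j‖ :=
      (hsa (1-u)).mul_left _
    refine Summable.of_nonneg_of_le (fun j => norm_nonneg _) (fun j => ?_) hg
    rw [norm_smul, norm_smul]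
    calc ‖(j.factorial : ℝ)⁻¹ * (1-u) ^ j‖ * ‖v * p ^ j‖
        ≤ ‖(j.factorial : ℝ)⁻¹ * (1-u) ^ j‖ * (‖v‖ * ‖p ^ j‖) := by
          apply mul_le_mul_of_nonneg_left (norm_mul_le _ _) (norm_nonneg _)
      _ = ‖v‖ * (‖(j.factorial : ℝ)⁻¹ * (1-u) ^ j‖ * ‖p ^ j‖) := by ring
  have hptwise : ∀ u : ℝ, exp (u • p) * v * exp ((1-u) • p) = ∑' q : ℕ × ℕ, Fq p v q u := by
    intro u
    rw [mul_assoc, hb_eq u, ea u, tsum_mul_tsum_of_summable_norm (hsa u) (hsb u)]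
    exact tsum_congr fun q => by
      rw [Fq, smul_mul_assoc, mul_smul_comm, smul_smul]
  rw [intervalIntegral.integral_of_le zero_le_one]
  rw [MeasureTheory.integral_congr_ae (Filter.Eventually.of_forall fun u => hptwise u)]
  have hFcont : ∀ q : ℕ × ℕ, Continuous (Fq p v q) := by
    intro q
    apply Continuous.smul _ continuous_const
    fun_prop
  have hint : ∀ q : ℕ × ℕ, MeasureTheory.Integrable (Fq p v q)
      (MeasureTheory.volume.restrict (Set.Ioc (0:ℝ) 1)) :=
    fun q => (hFcont q).integrableOn_Ioc
  have hbound : ∀ q : ℕ × ℕ, ∀ u ∈ Set.Ioc (0:ℝ) 1, ‖Fq p v q u‖ ≤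
      ((q.1.factorial : ℝ)⁻¹ * ‖p ^ q.1‖) * ((q.2.factorial : ℝ)⁻¹ * (‖v‖ * ‖p ^ q.2‖)) := by
    rintro ⟨i, j⟩ u hu
    obtain ⟨hu0, hu1⟩ := hu
    have h01 : (0:ℝ) ≤ u := le_of_lt hu0
    have h1u : (0:ℝ) ≤ 1 - u := by linarith
    rw [Fq, norm_smul]
    have hui : |u ^ i| ≤ 1 := by
      rw [abs_of_nonneg (by positivity)]
      exact pow_le_one₀ h01 hu1
    have huj : |(1-u) ^ j| ≤ 1 := by
      rw [abs_of_nonneg (by positivity)]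
      exact pow_le_one₀ h1u (by linarith)
    have hcoef : ‖(i.factorial : ℝ)⁻¹ * u ^ i * ((j.factorial : ℝ)⁻¹ * (1-u) ^ j)‖
        ≤ (i.factorial : ℝ)⁻¹ * (j.factorial : ℝ)⁻¹ := by
      rw [Real.norm_eq_abs, abs_mul, abs_mul, abs_mul, abs_of_nonneg (a := (i.factorial:ℝ)⁻¹) (by positivity),
        abs_of_nonneg (a := (j.factorial:ℝ)⁻¹) (by positivity)]
      calc (i.factorial : ℝ)⁻¹ * |u ^ i| * ((j.factorial : ℝ)⁻¹ * |(1-u) ^ j|)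
          ≤ (i.factorial : ℝ)⁻¹ * 1 * ((j.factorial : ℝ)⁻¹ * 1) := by
            apply mul_le_mul _ _ (by positivity) (by positivity)
            · exact mul_le_mul_of_nonneg_left hui (by positivity)
            · exact mul_le_mul_of_nonneg_left huj (by positivity)
        _ = (i.factorial : ℝ)⁻¹ * (j.factorial : ℝ)⁻¹ := by ring
    have hnm : ‖p ^ i * (v * p ^ j)‖ ≤ ‖p ^ i‖ * (‖v‖ * ‖p ^ j‖) :=
      le_trans (norm_mul_le _ _) (mul_le_mul_of_nonneg_left (norm_mul_le _ _) (norm_nonneg _))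
    calc ‖(i.factorial : ℝ)⁻¹ * u ^ i * ((j.factorial : ℝ)⁻¹ * (1-u) ^ j)‖ * ‖p ^ i * (v * p ^ j)‖
        ≤ ((i.factorial : ℝ)⁻¹ * (j.factorial : ℝ)⁻¹) * (‖p ^ i‖ * (‖v‖ * ‖p ^ j‖)) :=
          mul_le_mul hcoef hnm (norm_nonneg _) (by positivity)
      _ = ((i.factorial : ℝ)⁻¹ * ‖p ^ i‖) * ((j.factorial : ℝ)⁻¹ * (‖v‖ * ‖p ^ j‖)) := by ring
  have hCsum : Summable fun q : ℕ × ℕ =>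
      ((q.1.factorial : ℝ)⁻¹ * ‖p ^ q.1‖) * ((q.2.factorial : ℝ)⁻¹ * (‖v‖ * ‖p ^ q.2‖)) := by
    have h1 : Summable fun i : ℕ => (i.factorial : ℝ)⁻¹ * ‖p ^ i‖ := by
      refine Summable.congr (norm_expSeries_summable' (𝕂 := ℝ) p) fun i => ?_
      rw [norm_smul, Real.norm_eq_abs, abs_of_nonneg (by positivity)]
    have h2 : Summable fun j : ℕ => (j.factorial : ℝ)⁻¹ * (‖v‖ * ‖p ^ j‖) := by
      refine Summable.congr (h1.mul_left ‖v‖) fun j => by ring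
    exact h1.mul_of_nonneg h2 (fun i => by positivity) (fun j => by positivity)
  have hsumint : Summable fun q : ℕ × ℕ =>
      ∫ u, ‖Fq p v q u‖ ∂(MeasureTheory.volume.restrict (Set.Ioc (0:ℝ) 1)) := by
    refine Summable.of_nonneg_of_le
      (fun q => MeasureTheory.integral_nonneg fun u => norm_nonneg _) (fun q => ?_) hCsum
    calc (∫ u, ‖Fq p v q u‖ ∂(MeasureTheory.volume.restrict (Set.Ioc (0:ℝ) 1)))
        ≤ ∫ _, ((q.1.factorial : ℝ)⁻¹ * ‖p ^ q.1‖) * ((q.2.factorial : ℝ)⁻¹ * (‖v‖ * ‖p ^ q.2‖))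
            ∂(MeasureTheory.volume.restrict (Set.Ioc (0:ℝ) 1)) := by
          exact MeasureTheory.integral_mono_ae (hint q).norm (MeasureTheory.integrable_const _)
            ((MeasureTheory.ae_restrict_iff' measurableSet_Ioc).2
              (Filter.Eventually.of_forall fun u hu => hbound q u hu))
      _ = ((q.1.factorial : ℝ)⁻¹ * ‖p ^ q.1‖) * ((q.2.factorial : ℝ)⁻¹ * (‖v‖ * ‖p ^ q.2‖)) := by
          simp [MeasureTheory.integral_const, Real.volume_Ioc]
  rw [← MeasureTheory.integral_tsum_of_summable_integral_norm hint hsumint]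
  refine tsum_congr fun q => ?_
  simp only [Fq]
  rw [integral_smul_const]
  congr 1
  have hco : ∀ u : ℝ, ((q.1.factorial : ℝ)⁻¹ * u ^ q.1) * ((q.2.factorial : ℝ)⁻¹ * (1-u) ^ q.2)
      = ((q.1.factorial : ℝ)⁻¹ * (q.2.factorial : ℝ)⁻¹) * (u ^ q.1 * (1-u) ^ q.2) :=
    fun u => by ring
  rw [MeasureTheory.integral_congr_ae (Filter.Eventually.of_forall hco),
    MeasureTheory.integral_const_mul, ← intervalIntegral.integral_of_le zero_le_one,
    beta_nat q.2 q.1]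
  have h1 : ((q.1+q.2+1).factorial : ℝ) ≠ 0 := by positivity
  have h2 : (q.1.factorial : ℝ) ≠ 0 := by positivity
  have h3 : (q.2.factorial : ℝ) ≠ 0 := by positivity
  field_simp

/-- Derivative of `x ^ n` in a noncommutative algebra. -/
noncomputable def Pn (p : A) (n : ℕ) : A →L[ℝ] A :=
  ∑ i ∈ Finset.range n,
    (ContinuousLinearMap.mul ℝ A (p ^ i)).comp
      ((ContinuousLinearMap.mul ℝ A).flip (p ^ (n - 1 - i)))

lemma Pn_apply (p : A) (n : ℕ) (w : A) :
    Pn p n w = ∑ i ∈ Finset.range n, p ^ i * (w * p ^ (n - 1 - i)) := by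
  simp [Pn, mul_assoc]

lemma hasFDerivAt_pow' (n : ℕ) (p : A) :
    HasFDerivAt (fun x : A => x ^ n) (Pn p n) p := by
  induction n with
  | zero =>
    simp only [pow_zero]
    have : (Pn p 0) = 0 := by simp [Pn]
    rw [this]
    exact hasFDerivAt_const 1 p
  | succ n IH =>
    have h := IH.mul' (hasFDerivAt_id p)
    simp only [id] at h
    have heq : (fun y : A => y ^ n * y) = fun y : A => y ^ (n+1) := by
      funext y; rw [← pow_succ]
    change HasFDerivAt (fun y : A => y ^ n * y) _ p at h
    rw [heq] at h
    convert h using 1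
    ext w
    simp only [Pn, ContinuousLinearMap.sum_apply, ContinuousLinearMap.comp_apply,
      ContinuousLinearMap.coe_sum', ContinuousLinearMap.add_apply,
      ContinuousLinearMap.smul_apply, ContinuousLinearMap.smulRight_apply,
      ContinuousLinearMap.flip_apply, ContinuousLinearMap.mul_apply', ContinuousLinearMap.id_apply,
      Finset.sum_apply]
    rw [Finset.sum_range_succ]
    simp only [Nat.add_sub_cancel]
    have hlast : p ^ n * (w * p ^ (n - n)) = p ^ n • w := by
      simp [smul_eq_mul]
    rw [hlast, add_comm]
    congr 1
    rw [Finset.smul_sum]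
    apply Finset.sum_congr rfl
    intro i hi
    rw [Finset.mem_range] at hi
    have h1 : n - i = (n - 1 - i) + 1 := by omega
    rw [op_smul_eq_mul, mul_assoc, mul_assoc, ← pow_succ, ← h1]

lemma norm_mulL_pow_le (p : A) (i : ℕ) : ‖ContinuousLinearMap.mul ℝ A (p ^ i)‖ ≤ ‖p‖ ^ i := by
  apply ContinuousLinearMap.opNorm_le_bound _ (by positivity)
  intro w
  simp only [ContinuousLinearMap.mul_apply']
  cases i with
  | zero => simp
  | succ i =>
    calc ‖p ^ (i+1) * w‖ ≤ ‖p ^ (i+1)‖ * ‖w‖ := norm_mul_le _ _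
      _ ≤ ‖p‖ ^ (i+1) * ‖w‖ :=
        mul_le_mul_of_nonneg_right (norm_pow_le' p (Nat.succ_pos i)) (norm_nonneg _)

lemma norm_mulR_pow_le (p : A) (i : ℕ) :
    ‖(ContinuousLinearMap.mul ℝ A).flip (p ^ i)‖ ≤ ‖p‖ ^ i := by
  apply ContinuousLinearMap.opNorm_le_bound _ (by positivity)
  intro w
  simp only [ContinuousLinearMap.flip_apply, ContinuousLinearMap.mul_apply']
  cases i with
  | zero => simp
  | succ i =>
    calc ‖w * p ^ (i+1)‖ ≤ ‖w‖ * ‖p ^ (i+1)‖ := norm_mul_le _ _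
      _ ≤ ‖w‖ * ‖p‖ ^ (i+1) :=
        mul_le_mul_of_nonneg_left (norm_pow_le' p (Nat.succ_pos i)) (norm_nonneg _)
      _ = ‖p‖ ^ (i+1) * ‖w‖ := mul_comm _ _

lemma norm_Pn_le (p : A) (n : ℕ) : ‖Pn p n‖ ≤ n * ‖p‖ ^ (n - 1) := by
  calc ‖Pn p n‖ ≤ ∑ i ∈ Finset.range n,
      ‖(ContinuousLinearMap.mul ℝ A (p ^ i)).comp
        ((ContinuousLinearMap.mul ℝ A).flip (p ^ (n - 1 - i)))‖ := norm_sum_le _ _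
    _ ≤ ∑ i ∈ Finset.range n, ‖p‖ ^ (n-1) := by
      apply Finset.sum_le_sum
      intro i hi
      rw [Finset.mem_range] at hi
      calc ‖(ContinuousLinearMap.mul ℝ A (p ^ i)).comp
            ((ContinuousLinearMap.mul ℝ A).flip (p ^ (n - 1 - i)))‖
          ≤ ‖ContinuousLinearMap.mul ℝ A (p ^ i)‖ *
            ‖(ContinuousLinearMap.mul ℝ A).flip (p ^ (n - 1 - i))‖ :=
            ContinuousLinearMap.opNorm_comp_le _ _
        _ ≤ ‖p‖ ^ i * ‖p‖ ^ (n - 1 - i) :=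
            mul_le_mul (norm_mulL_pow_le p i) (norm_mulR_pow_le p _) (norm_nonneg _) (by positivity)
        _ = ‖p‖ ^ (n - 1) := by
            rw [← pow_add]
            congr 1
            omega
    _ = n * ‖p‖ ^ (n-1) := by
      rw [Finset.sum_const, Finset.card_range, nsmul_eq_mul]

lemma summable_bound (r : ℝ) : Summable (fun n : ℕ => (n.factorial : ℝ)⁻¹ * (n * r ^ (n - 1))) := by
  rw [← summable_nat_add_iff 1]
  have heq : ∀ n : ℕ, ((n+1).factorial : ℝ)⁻¹ * ((n+1 : ℕ) * r ^ (n + 1 - 1)) = r ^ n / n.factorial := by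
    intro n
    have h1 : ((n+1).factorial : ℝ) = (n+1 : ℝ) * n.factorial := by
      rw [Nat.factorial_succ]; push_cast; ring
    have h2 : (n.factorial : ℝ) ≠ 0 := by positivity
    have h3 : ((n:ℝ)+1) ≠ 0 := by positivity
    rw [h1]
    push_cast
    field_simp
  exact Summable.congr (Real.summable_pow_div_factorial r) fun n => (heq n).symm

lemma hasFDerivAt_exp' (p : A) :
    HasFDerivAt (exp) (∑' n : ℕ, (n.factorial : ℝ)⁻¹ • Pn p n) p := by
  have hball : p ∈ Metric.ball (0 : A) (‖p‖ + 1) := by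
    rw [Metric.mem_ball, dist_zero_right]
    exact lt_add_one _
  have h := hasFDerivAt_tsum_of_isPreconnected
    (f := fun (n : ℕ) (x : A) => (n.factorial : ℝ)⁻¹ • x ^ n)
    (f' := fun (n : ℕ) (x : A) => (n.factorial : ℝ)⁻¹ • Pn x n)
    (u := fun (n : ℕ) => (n.factorial : ℝ)⁻¹ * (n * (‖p‖ + 1) ^ (n - 1)))
    (summable_bound (‖p‖ + 1)) Metric.isOpen_ball
    ((convex_ball (0:A) (‖p‖+1)).isPreconnected)
    (fun n x _ => (hasFDerivAt_pow' n x).const_smul ((n.factorial : ℝ)⁻¹))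
    (fun n x hx => ?_) hball (expSeries_summable' (𝕂 := ℝ) p) hball
  · have : exp = fun y : A => ∑' n : ℕ, (n.factorial : ℝ)⁻¹ • y ^ n := exp_eq_tsum ℝ
    rw [this]
    exact h
  · rw [norm_smul, Real.norm_eq_abs, abs_of_nonneg (by positivity)]
    apply mul_le_mul_of_nonneg_left _ (by positivity)
    calc ‖Pn x n‖ ≤ n * ‖x‖ ^ (n-1) := norm_Pn_le x n
      _ ≤ n * (‖p‖ + 1) ^ (n-1) := by
        apply mul_le_mul_of_nonneg_left _ (by positivity)
        apply pow_le_pow_left₀ (norm_nonneg _)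
        rw [Metric.mem_ball, dist_zero_right] at hx
        linarith

lemma summable_D (p : A) : Summable fun n : ℕ => (n.factorial : ℝ)⁻¹ • Pn p n := by
  apply Summable.of_norm
  refine Summable.of_nonneg_of_le (fun n => norm_nonneg _) (fun n => ?_) (summable_bound ‖p‖)
  have he : ‖(n.factorial : ℝ)⁻¹ • Pn p n‖ = (n.factorial : ℝ)⁻¹ * ‖Pn p n‖ := by
    rw [norm_smul (((n.factorial : ℝ))⁻¹) (Pn p n), Real.norm_eq_abs, abs_of_nonneg (by positivity)]
  rw [he]
  exact mul_le_mul_of_nonneg_left (norm_Pn_le p n) (by positivity)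

lemma fact_inv_le (i j : ℕ) :
    (((i + j + 1).factorial : ℝ))⁻¹ ≤ (i.factorial : ℝ)⁻¹ * (j.factorial : ℝ)⁻¹ := by
  rw [← mul_inv]
  have hfact : (i.factorial * j.factorial : ℝ) ≤ ((i+j+1).factorial : ℝ) := by
    have h1 : i.factorial * j.factorial ≤ (i+j).factorial :=
      Nat.le_of_dvd (Nat.factorial_pos _) (Nat.factorial_mul_factorial_dvd_factorial_add i j)
    have h2 : (i+j).factorial ≤ (i+j+1).factorial := Nat.factorial_le (by omega)
    exact_mod_cast le_trans h1 h2
  have hpos : (0:ℝ) < (i.factorial : ℝ) * (j.factorial : ℝ) := by positivity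
  exact inv_anti₀ hpos hfact

lemma summable_G (p w : A) :
    Summable fun q : ℕ × ℕ => (((q.1 + q.2 + 1).factorial : ℝ))⁻¹ • (p ^ q.1 * (w * p ^ q.2)) := by
  apply Summable.of_norm
  have h1 : Summable fun i : ℕ => (i.factorial : ℝ)⁻¹ * ‖p ^ i‖ := by
    refine Summable.congr (norm_expSeries_summable' (𝕂 := ℝ) p) fun i => ?_
    rw [norm_smul, Real.norm_eq_abs, abs_of_nonneg (by positivity)]
  have h2 : Summable fun j : ℕ => (j.factorial : ℝ)⁻¹ * (‖w‖ * ‖p ^ j‖) :=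
    Summable.congr (h1.mul_left ‖w‖) fun j => by ring
  have hC := h1.mul_of_nonneg h2 (fun i => by positivity) (fun j => by positivity)
  refine Summable.of_nonneg_of_le (fun q => norm_nonneg _) (fun q => ?_) hC
  obtain ⟨i, j⟩ := q
  rw [norm_smul, Real.norm_eq_abs, abs_of_nonneg (by positivity)]
  calc (((i + j + 1).factorial : ℝ))⁻¹ * ‖p ^ i * (w * p ^ j)‖
      ≤ ((i.factorial : ℝ)⁻¹ * (j.factorial : ℝ)⁻¹) * (‖p ^ i‖ * (‖w‖ * ‖p ^ j‖)) := by
        apply mul_le_mul (fact_inv_le i j) _ (norm_nonneg _) (by positivity)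
        exact le_trans (norm_mul_le _ _)
          (mul_le_mul_of_nonneg_left (norm_mul_le _ _) (norm_nonneg _))
    _ = ((i.factorial : ℝ)⁻¹ * ‖p ^ i‖) * ((j.factorial : ℝ)⁻¹ * (‖w‖ * ‖p ^ j‖)) := by ring

lemma D_apply (p w : A) :
    (∑' n : ℕ, (n.factorial : ℝ)⁻¹ • Pn p n) w
      = ∑' q : ℕ × ℕ, (((q.1 + q.2 + 1).factorial : ℝ))⁻¹ • (p ^ q.1 * (w * p ^ q.2)) := by
  classical
  have hS := summable_D p
  have happ : (∑' n : ℕ, (n.factorial : ℝ)⁻¹ • Pn p n) w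
      = ∑' n : ℕ, (n.factorial : ℝ)⁻¹ • (Pn p n w) := by
    have := (hS.hasSum.mapL (ContinuousLinearMap.apply ℝ A w)).tsum_eq
    simpa using this.symm
  rw [happ]
  have hSa : Summable fun n : ℕ => (n.factorial : ℝ)⁻¹ • (Pn p n w) := by
    have := hS.map (ContinuousLinearMap.apply ℝ A w).toLinearMap.toAddMonoidHom
      (ContinuousLinearMap.apply ℝ A w).continuous
    simpa [Function.comp_def] using this
  rw [hSa.tsum_eq_zero_add]
  have h0 : (Nat.factorial 0 : ℝ)⁻¹ • (Pn p 0 w) = 0 := by simp [Pn]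
  rw [h0, zero_add]
  have hGsum := summable_G p w
  have hregroup : ∑' q : ℕ × ℕ, (((q.1 + q.2 + 1).factorial : ℝ))⁻¹ • (p ^ q.1 * (w * p ^ q.2))
      = ∑' n : ℕ, ∑ kl ∈ Finset.HasAntidiagonal.antidiagonal n,
          (((kl.1 + kl.2 + 1).factorial : ℝ))⁻¹ • (p ^ kl.1 * (w * p ^ kl.2)) := by
    conv_rhs => congr; ext; rw [← Finset.sum_finset_coe, ← tsum_fintype (L := .unconditional _)]
    rw [← Finset.HasAntidiagonal.sigmaAntidiagonalEquivProd.tsum_eq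
      (fun q : ℕ × ℕ => (((q.1 + q.2 + 1).factorial : ℝ))⁻¹ • (p ^ q.1 * (w * p ^ q.2)))]
    exact Summable.tsum_sigma' (fun n => (hasSum_fintype _).summable)
      (Finset.HasAntidiagonal.sigmaAntidiagonalEquivProd.summable_iff.mpr hGsum)
  rw [hregroup]
  refine tsum_congr fun n => ?_
  rw [Finset.Nat.sum_antidiagonal_eq_sum_range_succ_mk]
  rw [Pn_apply, Finset.smul_sum]
  apply Finset.sum_congr rfl
  intro k hk
  rw [Finset.mem_range] at hk
  have h1 : k + (n - k) + 1 = n + 1 := by omega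
  have h2 : n + 1 - 1 - k = n - k := by omega
  rw [h1, h2]

/-- The key derivative formula: `d(exp)_p(v) = θ^R_p(v) · exp p`. -/
lemma hasFDerivAt_exp_key (p : A) :
    ∃ D : A →L[ℝ] A, HasFDerivAt (exp) D p ∧ ∀ v, D v = thetaR p v * exp p := by
  refine ⟨∑' n : ℕ, (n.factorial : ℝ)⁻¹ • Pn p n, hasFDerivAt_exp' p, fun v => ?_⟩
  rw [D_apply, ← integral_conj, ← thetaR_mul_exp]

end Stmt12Aux

/-- Let `BCH` satisfy `exp (BCH a b) = exp a * exp b` with `exp` injective.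
Then for `p₁, p₂` sufficiently small, the solution `k` of the ODE `θ^R_{k(t)}(k̇(t)) = p₁`,
`k(0) = p₂`, is `k(t) = BCH(t p₁, p₂)`. -/
theorem stmt12 {A : Type*} [NormedRing A] [NormedAlgebra ℝ A] [CompleteSpace A]
    (BCH : A → A → A)
    (hexp : ∀ a b, NormedSpace.exp (BCH a b) = NormedSpace.exp a * NormedSpace.exp b)
    (hinj : Function.Injective (NormedSpace.exp : A → A)) :
    ∃ ε > (0:ℝ), ∀ p₁ p₂ : A, ‖p₁‖ < ε → ‖p₂‖ < ε →
      ∀ k v : ℝ → A, k 0 = p₂ →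
        (∀ s ∈ Set.Icc (0:ℝ) 1, HasDerivAt k (v s) s) →
        (∀ s ∈ Set.Icc (0:ℝ) 1, thetaR (k s) (v s) = p₁) →
        ∀ t ∈ Set.Icc (0:ℝ) 1, k t = BCH (t • p₁) p₂ := by
  refine ⟨1, one_pos, ?_⟩
  intro p₁ p₂ _ _ k v hk0 hkd hth t ht
  -- `exp ∘ k` solves the linear ODE `f' = p₁ * f`
  have hf : ∀ s ∈ Set.Icc (0:ℝ) 1,
      HasDerivAt (fun τ => exp (k τ)) (p₁ * exp (k s)) s := by
    intro s hs
    obtain ⟨D, hD, hDval⟩ := Stmt12Aux.hasFDerivAt_exp_key (k s)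
    have hchain := hD.comp_hasDerivAt s (hkd s hs)
    have : D (v s) = p₁ * exp (k s) := by
      rw [hDval, hth s hs]
    rwa [this] at hchain
  -- the auxiliary function `exp(-t p₁) exp(k t)` has zero derivative
  have hgd : ∀ s : ℝ, HasDerivAt (fun τ : ℝ => exp (τ • (-p₁)))
      (exp (s • (-p₁)) * (-p₁)) s := fun s => hasDerivAt_exp_smul_const (-p₁) s
  have hhd : ∀ s ∈ Set.Icc (0:ℝ) 1,
      HasDerivAt (fun τ => exp (τ • (-p₁)) * exp (k τ)) 0 s := by
    intro s hs
    have h := (hgd s).mul (hf s hs)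
    have hz : exp (s • (-p₁)) * (-p₁) * exp (k s)
        + exp (s • (-p₁)) * (p₁ * exp (k s)) = 0 := by
      rw [mul_assoc, ← mul_add, neg_mul, neg_add_cancel, mul_zero]
    rwa [hz] at h
  have hcont : ContinuousOn (fun τ => exp (τ • (-p₁)) * exp (k τ)) (Set.Icc 0 1) :=
    fun s hs => ((hhd s hs).continuousAt).continuousWithinAt
  have hconst := constant_of_has_deriv_right_zero hcont
    (fun s hs => (hhd s (Set.mem_Icc_of_Ico hs)).hasDerivWithinAt)
  have ht' := hconst t ht
  have h0 : exp ((0:ℝ) • (-p₁)) * exp (k 0) = exp p₂ := by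
    rw [hk0, zero_smul, exp_zero, one_mul]
  rw [h0] at ht'
  have hcancel : exp (t • p₁) * exp (t • (-p₁)) = 1 := by
    have hc : Commute (t • p₁) (t • (-p₁)) :=
      (((Commute.refl p₁).neg_right).smul_left t).smul_right t
    rw [← exp_add_of_commute hc, smul_neg, add_neg_cancel, exp_zero]
  have hk : exp (k t) = exp (t • p₁) * exp p₂ := by
    calc exp (k t) = 1 * exp (k t) := (one_mul _).symm
      _ = exp (t • p₁) * (exp (t • (-p₁)) * exp (k t)) := by
          rw [← hcancel, mul_assoc]
      _ = exp (t • p₁) * exp p₂ := by rw [ht']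
  apply hinj
  rw [hexp, hk]
end

section
/- Let (S_t)_{t∈[0,1]} be a smooth family of functions on X = M* × M* × M satisfying the naturality identity S_t(λp₁, λp₂, x) = λ S_{λt}(p₁,p₂,x) for all λ ∈ [0,1]. Then L_ℰ S_t = S_t + t ∂_t S_t, where ℰ = p₁∂_{p₁} + p₂∂_{p₂}, and consequently, if additionally J_t*C_t = L_ℰ S_t − S_t (Lemma relating generating function and canonical 2-cocycle), then S_t = (p₁+p₂)(x) + ∫₀^t (1/s) (J_s*C_s) ds whenever S_0(p₁,p₂,x) = (p₁+p₂)(x). -/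
open Matrix

/-- For a natural smooth family of generating functions
(`S_t(λp₁,λp₂,x) = λ S_{λt}(p₁,p₂,x)`) one has `L_ℰ S_t = S_t + t ∂_t S_t`; consequently,
if `J_t*C_t = L_ℰ S_t − S_t` and `S_0(p₁,p₂,x) = (p₁+p₂)(x)`, then
`S_t = (p₁+p₂)(x) + ∫₀^t (1/s) J_s*C_s ds`. -/
theorem stmt16 {n : ℕ}
    (S JC : ℝ → ((Fin n → ℝ) × (Fin n → ℝ) × (Fin n → ℝ)) → ℝ)
    (hS : ContDiff ℝ (⊤ : ℕ∞)
      (fun q : ℝ × ((Fin n → ℝ) × (Fin n → ℝ) × (Fin n → ℝ)) => S q.1 q.2))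
    (hnat : ∀ t ∈ Set.Icc (0:ℝ) 1, ∀ lam ∈ Set.Icc (0:ℝ) 1, ∀ p₁ p₂ x : Fin n → ℝ,
      S t (lam • p₁, lam • p₂, x) = lam * S (lam * t) (p₁, p₂, x)) :
    (∀ t ∈ Set.Icc (0:ℝ) 1, ∀ z : (Fin n → ℝ) × (Fin n → ℝ) × (Fin n → ℝ),
      fderiv ℝ (S t) z (z.1, z.2.1, 0) = S t z + t * deriv (fun s => S s z) t) ∧
    ((∀ z : (Fin n → ℝ) × (Fin n → ℝ) × (Fin n → ℝ),
        S 0 z = (z.1 + z.2.1) ⬝ᵥ z.2.2) →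
      (∀ t ∈ Set.Icc (0:ℝ) 1, ∀ z : (Fin n → ℝ) × (Fin n → ℝ) × (Fin n → ℝ),
        JC t z = fderiv ℝ (S t) z (z.1, z.2.1, 0) - S t z) →
      ∀ t ∈ Set.Icc (0:ℝ) 1, ∀ z : (Fin n → ℝ) × (Fin n → ℝ) × (Fin n → ℝ),
        S t z = (z.1 + z.2.1) ⬝ᵥ z.2.2 + ∫ s in (0:ℝ)..t, s⁻¹ * JC s z) := by
  -- differentiability of `S t` in `z`
  have hSt : ∀ t : ℝ, Differentiable ℝ (S t) := by
    intro t
    exact (hS.differentiable (by simp)).comp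
      ((differentiable_const t).prodMk differentiable_id)
  -- smoothness of `fun s => S s z`
  have hg : ∀ z : (Fin n → ℝ) × (Fin n → ℝ) × (Fin n → ℝ),
      ContDiff ℝ (⊤ : ℕ∞) (fun s => S s z) := by
    intro z
    exact hS.comp (contDiff_id.prodMk contDiff_const)
  have part1 : ∀ t ∈ Set.Icc (0:ℝ) 1, ∀ z : (Fin n → ℝ) × (Fin n → ℝ) × (Fin n → ℝ),
      fderiv ℝ (S t) z (z.1, z.2.1, 0) = S t z + t * deriv (fun s => S s z) t := by
    intro t ht z
    -- two functions of `lam`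
    set φ : ℝ → ℝ := fun lam => S t (lam • z.1, lam • z.2.1, z.2.2) with hφdef
    set ψ : ℝ → ℝ := fun lam => lam * S (lam * t) z with hψdef
    have hι : HasDerivAt (fun lam : ℝ => ((lam • z.1, lam • z.2.1, z.2.2) :
        (Fin n → ℝ) × (Fin n → ℝ) × (Fin n → ℝ))) (z.1, z.2.1, 0) 1 := by
      have h1 : HasDerivAt (fun lam : ℝ => lam • z.1) z.1 1 := by
        simpa using (hasDerivAt_id (1:ℝ)).smul_const z.1
      have h2 : HasDerivAt (fun lam : ℝ => lam • z.2.1) z.2.1 1 := by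
        simpa using (hasDerivAt_id (1:ℝ)).smul_const z.2.1
      have h3 : HasDerivAt (fun _ : ℝ => z.2.2) 0 1 := hasDerivAt_const 1 z.2.2
      exact h1.prodMk (h2.prodMk h3)
    have hφ : HasDerivAt φ (fderiv ℝ (S t) z (z.1, z.2.1, 0)) 1 := by
      have hF : HasFDerivAt (S t) (fderiv ℝ (S t) z)
          ((1:ℝ) • z.1, (1:ℝ) • z.2.1, z.2.2) := by
        simpa using (hSt t z).hasFDerivAt
      have := hF.comp_hasDerivAt 1 hι
      simpa [hφdef, Function.comp_def] using this
    have hinner : HasDerivAt (fun lam : ℝ => S (lam * t) z)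
        (deriv (fun s => S s z) t * t) 1 := by
      have hgd : HasDerivAt (fun s => S s z) (deriv (fun s => S s z) (1 * t)) (1 * t) :=
        ((hg z).differentiable (by simp)).differentiableAt.hasDerivAt
      have := HasDerivAt.comp (1:ℝ) hgd (hasDerivAt_mul_const t)
      simpa [Function.comp_def] using this
    have hψ : HasDerivAt ψ (S t z + t * deriv (fun s => S s z) t) 1 := by
      have := (hasDerivAt_id' (x := (1:ℝ))).mul hinner
      simpa [hψdef, mul_comm, Pi.mul_def] using this
    -- the functions agree on `Icc 0 1`
    have heq : ∀ lam ∈ Set.Icc (0:ℝ) 1, φ lam = ψ lam := by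
      intro lam hlam
      simpa [hφdef, hψdef] using hnat t ht lam hlam z.1 z.2.1 z.2.2
    have h1mem : (1:ℝ) ∈ Set.Icc (0:ℝ) 1 := by norm_num
    have hu : UniqueDiffWithinAt ℝ (Set.Icc (0:ℝ) 1) 1 :=
      (uniqueDiffOn_Icc (by norm_num : (0:ℝ) < 1)) 1 h1mem
    have hφw : HasDerivWithinAt φ (fderiv ℝ (S t) z (z.1, z.2.1, 0))
        (Set.Icc (0:ℝ) 1) 1 := hφ.hasDerivWithinAt
    have hψw : HasDerivWithinAt φ (S t z + t * deriv (fun s => S s z) t)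
        (Set.Icc (0:ℝ) 1) 1 :=
      hψ.hasDerivWithinAt.congr heq (heq 1 h1mem)
    have := hφw.derivWithin hu
    rw [← this, hψw.derivWithin hu]
  refine ⟨part1, ?_⟩
  intro h0 hJC t ht z
  set g : ℝ → ℝ := fun s => S s z with hgdef
  have hgc : ContDiff ℝ (⊤ : ℕ∞) g := hg z
  have hg' : Continuous (deriv g) := hgc.continuous_deriv (by simp)
  have key : ∀ s ∈ Set.Ioc (0:ℝ) t, s⁻¹ * JC s z = deriv g s := by
    intro s hs
    have hs1 : s ∈ Set.Icc (0:ℝ) 1 := ⟨hs.1.le, hs.2.trans ht.2⟩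
    have h1 := part1 s hs1 z
    have h2 := hJC s hs1 z
    rw [h2, h1]
    have hsne : s ≠ 0 := hs.1.ne'
    field_simp [hgdef]
    rw [hgdef]
    ring
  have hcongr : (∫ s in (0:ℝ)..t, s⁻¹ * JC s z) = ∫ s in (0:ℝ)..t, deriv g s := by
    apply intervalIntegral.integral_congr_ae
    refine Filter.Eventually.of_forall ?_
    intro s hs
    rw [Set.uIoc_of_le ht.1] at hs
    exact key s hs
  have hftc : (∫ s in (0:ℝ)..t, deriv g s) = g t - g 0 :=
    intervalIntegral.integral_deriv_eq_sub
      (fun x _ => (hgc.differentiable (by simp)) x)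
      (hg'.intervalIntegrable 0 t)
  have hg0 : g 0 = (z.1 + z.2.1) ⬝ᵥ z.2.2 := h0 z
  rw [hcongr, hftc, hg0]
  ring
end
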